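/- Let G be a group generated by elements a_1,…,a_m (m ≥ 2) which is δ-hyperbolic. Let ℓ and a be integers with 0 ≤ a ≤ ℓ and let g ∈ S_{ℓ,a}. Then the number of elements g' ∈ S_{ℓ,a} such that ‖gg'‖ ≥ 2ℓ − 4a is at least |S_{ℓ,a}| − |B_{ℓ−a+2δ}|. -/

import Mathlib

open Filter Set

namespace GrowthRQ

variable {G : Type*} [Group G] {m : ℕ}

/-- Word norm with respect to the generators `gen i` and their inverses. -/
noncomputable def wordNorm (gen : Fin m → G) (x : G) : ℕ :=
  sInf {n | ∃ w : List (Fin m × Bool), w.length = n ∧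
    (w.map (fun p => if p.2 then gen p.1 else (gen p.1)⁻¹)).prod = x}

/-- Ball of (real) radius `r` for the word norm. -/
def ball (gen : Fin m → G) (r : ℝ) : Set G := {x | (wordNorm gen x : ℝ) ≤ r}

/-- Annulus of elements of norm in `(ℓ - a, ℓ]`. -/
def ann (gen : Fin m → G) (ℓ a : ℝ) : Set G := ball gen ℓ \ ball gen (ℓ - a)

/-- Growth exponent in base `2m-1`. (The limit exists by submultiplicativity,
so it equals the `limsup`.) -/
noncomputable def growthExponent (gen : Fin m → G) : ℝ :=
  Filter.limsup (fun L : ℕ => Real.logb (2 * (m : ℝ) - 1) ((ball gen L).ncard) / L) Filter.atTop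

/-- Gromov product with origin `e`. -/
noncomputable def gromov (gen : Fin m → G) (x y : G) : ℝ :=
  ((wordNorm gen x : ℝ) + (wordNorm gen y : ℝ) - (wordNorm gen (x⁻¹ * y) : ℝ)) / 2

/-- `δ`-hyperbolicity via the Gromov product. -/
def IsHyperbolic (gen : Fin m → G) (δ : ℝ) : Prop :=
  ∀ x y z : G, gromov gen x z ≥ min (gromov gen x y) (gromov gen y z) - δ

/-- Non-elementary: not virtually cyclic. -/
def NonElementary (G : Type*) [Group G] : Prop :=
  ¬ ∃ H : Subgroup G, H.index ≠ 0 ∧ IsCyclic H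

/-- Probability, for `N` independent uniform choices of relators in the ball of radius `ℓ`,
that the chosen tuple satisfies `P`. -/
noncomputable def quotProb (gen : Fin m → G) (ℓ N : ℕ) (P : (Fin N → G) → Prop) : ℝ :=
  (({r : Fin N → G | (∀ i, r i ∈ ball gen (ℓ : ℝ)) ∧ P r}).ncard : ℝ) /
  (({r : Fin N → G | ∀ i, r i ∈ ball gen (ℓ : ℝ)}).ncard : ℝ)

/-- Images of the generators in the quotient by the normal closure of the relators. -/
noncomputable def quotGen (gen : Fin m → G) {N : ℕ} (r : Fin N → G) :
    Fin m → G ⧸ Subgroup.normalClosure (Set.range r) :=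
  fun i => QuotientGroup.mk (gen i)

theorem _root_.Set.ncard_le_ncard_sep_add_of_injOn {α β : Type*} {s : Set α} {t : Set β}
    {P : α → Prop} (f : α → β) (hf : MapsTo f {x ∈ s | ¬P x} t)
    (f_inj : InjOn f {x ∈ s | ¬P x}) (ht : t.Finite) :
    s.ncard ≤ {x ∈ s | P x}.ncard + t.ncard := by
  have hsep : s \ {x ∈ s | ¬P x} = {x ∈ s | P x} := by
    ext x
    simp only [Set.mem_sdiff, mem_ofPred_eq, not_and, not_not]
    tauto
  calc s.ncard ≤ (s \ {x ∈ s | ¬P x}).ncard + {x ∈ s | ¬P x}.ncard :=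
        ncard_le_ncard_sdiff_add_ncard _ _ (ht.of_injOn hf f_inj)
    _ ≤ {x ∈ s | P x}.ncard + t.ncard := by
        rw [hsep]
        exact Nat.add_le_add_left (ncard_le_ncard_of_injOn f hf f_inj ht) _

section WordNorm

variable (gen : Fin m → G)

def evalWord (w : List (Fin m × Bool)) : G :=
  (w.map (fun p => if p.2 then gen p.1 else (gen p.1)⁻¹)).prod

lemma evalWord_append (w₁ w₂ : List (Fin m × Bool)) :
    evalWord gen (w₁ ++ w₂) = evalWord gen w₁ * evalWord gen w₂ := by
  simp [evalWord]

lemma evalWord_reverse_map_not (w : List (Fin m × Bool)) :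
    evalWord gen (w.map (fun p => (p.1, !p.2))).reverse = (evalWord gen w)⁻¹ := by
  induction w with
  | nil => simp [evalWord]
  | cons p w ih =>
    obtain ⟨i, b⟩ := p
    simp only [List.map_cons, List.reverse_cons, evalWord_append, ih]
    cases b <;> simp [evalWord]

lemma wordNorm_le_length {x : G} {w : List (Fin m × Bool)} (h : evalWord gen w = x) :
    wordNorm gen x ≤ w.length :=
  Nat.sInf_le ⟨w, rfl, h⟩

variable {gen} (hgen : Subgroup.closure (Set.range gen) = ⊤)
include hgen

lemma exists_evalWord_eq (x : G) : ∃ w, evalWord gen w = x := by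
  have hx : x ∈ Subgroup.closure (Set.range gen) := hgen ▸ Subgroup.mem_top x
  induction hx using Subgroup.closure_induction with
  | mem _ h =>
    obtain ⟨i, rfl⟩ := h
    exact ⟨[(i, true)], by simp [evalWord]⟩
  | one => exact ⟨[], rfl⟩
  | mul _ _ _ _ hx hy =>
    obtain ⟨⟨u, rfl⟩, ⟨v, rfl⟩⟩ := And.intro hx hy
    exact ⟨u ++ v, evalWord_append gen u v⟩
  | inv _ _ hx =>
    obtain ⟨u, rfl⟩ := hx
    exact ⟨_, evalWord_reverse_map_not gen u⟩

lemma exists_length_eq_wordNorm (x : G) :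
    ∃ w, w.length = wordNorm gen x ∧ evalWord gen w = x := by
  obtain ⟨w, hw⟩ := exists_evalWord_eq hgen x
  exact Nat.sInf_mem (s := {n | ∃ w : List (Fin m × Bool), w.length = n ∧ evalWord gen w = x})
    ⟨w.length, w, rfl, hw⟩

lemma wordNorm_inv_le (x : G) : wordNorm gen x⁻¹ ≤ wordNorm gen x := by
  obtain ⟨w, hlen, rfl⟩ := exists_length_eq_wordNorm hgen x
  simpa [hlen] using wordNorm_le_length gen (evalWord_reverse_map_not gen w)

lemma wordNorm_inv (x : G) : wordNorm gen x⁻¹ = wordNorm gen x :=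
  le_antisymm (wordNorm_inv_le hgen x) (by simpa using wordNorm_inv_le hgen x⁻¹)

lemma wordNorm_mul_le (x y : G) : wordNorm gen (x * y) ≤ wordNorm gen x + wordNorm gen y := by
  obtain ⟨u, hu, rfl⟩ := exists_length_eq_wordNorm hgen x
  obtain ⟨v, hv, rfl⟩ := exists_length_eq_wordNorm hgen y
  simpa [hu, hv] using wordNorm_le_length gen (evalWord_append gen u v)

lemma exists_wordNorm_eq_of_le_wordNorm (x : G) {t : ℕ} (ht : t ≤ wordNorm gen x) :
    ∃ p, wordNorm gen p = t ∧ wordNorm gen (p⁻¹ * x) + t = wordNorm gen x := by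
  obtain ⟨w, hlen, hw⟩ := exists_length_eq_wordNorm hgen x
  set p := evalWord gen (w.take t)
  have h_take : wordNorm gen p ≤ t := (wordNorm_le_length gen rfl).trans (by simp)
  have h_drop : wordNorm gen (p⁻¹ * x) ≤ w.length - t := by
    refine (wordNorm_le_length gen ?_).trans_eq (List.length_drop ..)
    rw [← hw, ← List.take_append_drop t w, evalWord_append, inv_mul_cancel_left,
      List.take_append_drop]
  have h_tri : wordNorm gen x ≤ wordNorm gen p + wordNorm gen (p⁻¹ * x) := by
    simpa using wordNorm_mul_le hgen p (p⁻¹ * x)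
  exact ⟨p, by omega, by omega⟩

lemma ball_finite (r : ℝ) : (ball gen r).Finite := by
  refine ((List.finite_length_le (Fin m × Bool) ⌈r⌉₊).image (evalWord gen)).subset ?_
  intro x hx
  obtain ⟨w, hlen, hw⟩ := exists_length_eq_wordNorm hgen x
  refine ⟨w, ?_, hw⟩
  rw [mem_ofPred_eq, hlen]
  exact_mod_cast (show (wordNorm gen x : ℝ) ≤ r from hx).trans (Nat.le_ceil r)

end WordNorm

lemma IsHyperbolic.wordNorm_inv_mul_le {gen : Fin m → G} {δ : ℝ} (hhyp : IsHyperbolic gen δ)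
    {p x y : G} {t : ℝ} (hpx : t ≤ gromov gen p x) (hxy : t ≤ gromov gen x y) :
    (wordNorm gen (p⁻¹ * y) : ℝ) ≤ wordNorm gen p + wordNorm gen y - 2 * t + 2 * δ := by
  have h := hhyp p x y
  have : t - δ ≤ gromov gen p y := le_trans (by gcongr; exact le_min hpx hxy) h
  unfold gromov at this
  linarith

/-- Take `p` at distance `a` from `1` on a geodesic to `g⁻¹`. A `g'` with short `g * g'` has
Gromov product at least `a` with `g⁻¹`, so by hyperbolicity it passes within `2δ` of `p`. -/
lemma exists_inv_mul_mem_ball {gen : Fin m → G} (hgen : Subgroup.closure (Set.range gen) = ⊤)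
    {δ : ℝ} (hhyp : IsHyperbolic gen δ) {ℓ a : ℕ} {g : G} (hg : g ∈ ann gen ℓ a) :
    ∃ p, ∀ g' ∈ ann gen ℓ a, (wordNorm gen (g * g') : ℝ) < 2 * ℓ - 4 * a →
      p⁻¹ * g' ∈ ball gen (ℓ - a + 2 * δ) := by
  have hg_gt : (ℓ : ℝ) - a < wordNorm gen g := not_le.mp hg.2
  have hg_inv := wordNorm_inv hgen g
  by_cases hag : a ≤ wordNorm gen g
  · obtain ⟨p, hp, hpg⟩ := exists_wordNorm_eq_of_le_wordNorm hgen g⁻¹ (hg_inv ▸ hag)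
    rw [hg_inv] at hpg
    refine ⟨p, fun g' hg' hshort => ?_⟩
    have hg'_le : (wordNorm gen g' : ℝ) ≤ ℓ := hg'.1
    have hg'_gt : (ℓ : ℝ) - a < wordNorm gen g' := not_le.mp hg'.2
    have hpx : (a : ℝ) ≤ gromov gen p g⁻¹ := by
      rw [gromov, hp, hg_inv]
      have : (wordNorm gen (p⁻¹ * g⁻¹) : ℝ) + a = wordNorm gen g := by exact_mod_cast hpg
      linarith
    have hxy : (a : ℝ) ≤ gromov gen g⁻¹ g' := by
      rw [gromov, inv_inv, hg_inv]
      linarith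
    have := hhyp.wordNorm_inv_mul_le hpx hxy
    rw [hp] at this
    show (wordNorm gen (p⁻¹ * g') : ℝ) ≤ ℓ - a + 2 * δ
    linarith
  · -- then `ℓ < 2a`, so `2ℓ - 4a < 0` and no `g'` qualifies
    refine ⟨1, fun g' _ hshort => absurd hshort ?_⟩
    have : (wordNorm gen g : ℝ) < a := by exact_mod_cast not_le.mp hag
    have : (0 : ℝ) ≤ wordNorm gen (g * g') := Nat.cast_nonneg _
    linarith

theorem statement8_general {G : Type*} [Group G] {m : ℕ} (gen : Fin m → G)
    (hgen : Subgroup.closure (Set.range gen) = ⊤)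
    (δ : ℝ) (hhyp : IsHyperbolic gen δ)
    (ℓ a : ℕ) (g : G) (hg : g ∈ ann gen (ℓ : ℝ) (a : ℝ)) :
    (({g' ∈ ann gen (ℓ : ℝ) (a : ℝ) |
        2 * (ℓ : ℝ) - 4 * a ≤ (wordNorm gen (g * g') : ℝ)}).ncard : ℝ) ≥
      ((ann gen (ℓ : ℝ) (a : ℝ)).ncard : ℝ) - ((ball gen ((ℓ : ℝ) - a + 2 * δ)).ncard : ℝ) := by
  obtain ⟨p, hp⟩ := exists_inv_mul_mem_ball hgen hhyp hg
  have hcard := Set.ncard_le_ncard_sep_add_of_injOn (fun g' => p⁻¹ * g')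
    (fun g' hg' => hp g' hg'.1 (not_le.mp hg'.2)) (mul_right_injective p⁻¹).injOn
    (ball_finite hgen ((ℓ : ℝ) - a + 2 * δ))
  rw [ge_iff_le, sub_le_iff_le_add]
  exact_mod_cast hcard

/-- in a `δ`-hyperbolic group, for `0 ≤ a ≤ ℓ` and `g ∈ S_{ℓ,a}`, the number
of `g' ∈ S_{ℓ,a}` with `‖g g'‖ ≥ 2ℓ - 4a` is at least `|S_{ℓ,a}| - |B_{ℓ-a+2δ}|`. -/
theorem statement8 {G : Type*} [Group G] {m : ℕ} (hm : 2 ≤ m) (gen : Fin m → G)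
    (hgen : Subgroup.closure (Set.range gen) = ⊤)
    (δ : ℝ) (hδ : 0 ≤ δ) (hhyp : IsHyperbolic gen δ)
    (ℓ a : ℕ) (ha : a ≤ ℓ) (g : G) (hg : g ∈ ann gen (ℓ : ℝ) (a : ℝ)) :
    (({g' ∈ ann gen (ℓ : ℝ) (a : ℝ) |
        2 * (ℓ : ℝ) - 4 * a ≤ (wordNorm gen (g * g') : ℝ)}).ncard : ℝ) ≥
      ((ann gen (ℓ : ℝ) (a : ℝ)).ncard : ℝ) - ((ball gen ((ℓ : ℝ) - a + 2 * δ)).ncard : ℝ) :=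
  statement8_general gen hgen δ hhyp ℓ a g hg

end GrowthRQ
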